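/- arXiv:1210.6100 — 3 statements merged into one kernel-verified Lean document; each statement's English description precedes it below -/
import Mathlib

section
/- Let H be a complex Hilbert space, let D be a bounded selfadjoint operator on H, and let f : ℝ → ℂ be a Schwartz function. Then f(D) = (1/(2π)) ∫_ℝ f̂(t) · e^{itD} dt, where the integral is a Bochner integral in the Banach space of bounded operators on H. -/
/-!
Fourier inversion gives `f x = (1/2π) ∫ f̂(t) e^{itx} dt` at every real `x`. The integrand is
bounded by `|f̂ t|` uniformly in `x`, and `f̂` is integrable, so the continuous functional
calculus commutes with the integral (`cfc_integral`), which turns the scalar identity into the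
operator identity.
-/

open MeasureTheory

/-- The Fourier transform with the normalization `f̂(t) = ∫ f(x) e^{-itx} dx`. -/
noncomputable def fourierHat (f : ℝ → ℂ) (t : ℝ) : ℂ :=
  ∫ x : ℝ, f x * Complex.exp (-(Complex.I * t * x))

/-- Continuous functional calculus of a (selfadjoint) bounded operator `D`
applied to a function `f : ℝ → ℂ`.  Since the spectrum of a selfadjoint
operator is real, we implement it via the `ℂ`-valued continuous functional
calculus applied to `z ↦ f (Re z)`. -/
noncomputable def fc {H : Type*} [NormedAddCommGroup H] [InnerProductSpace ℂ H]
    [CompleteSpace H] (f : ℝ → ℂ) (D : H →L[ℂ] H) : H →L[ℂ] H :=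
  cfc (fun z : ℂ => f z.re) D

open FourierTransform Real Complex

lemma fourierHat_two_pi_mul (f : ℝ → ℂ) (s : ℝ) :
    fourierHat f (2 * π * s) = 𝓕 f s := by
  rw [fourierHat, Real.fourier_real_eq_integral_exp_smul]
  congr 1 with x
  rw [smul_eq_mul, mul_comm]
  push_cast
  ring_nf

lemma fourierHat_eq_fourier_comp_mul (f : ℝ → ℂ) :
    fourierHat f = fun t => 𝓕 f ((2 * π)⁻¹ * t) := by
  ext t
  rw [← fourierHat_two_pi_mul, mul_inv_cancel_left₀ two_pi_pos.ne']

lemma integrable_fourierHat {f : ℝ → ℂ} (hf : Integrable (𝓕 f)) :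
    Integrable (fourierHat f) := by
  rw [fourierHat_eq_fourier_comp_mul]
  exact hf.comp_mul_left' (inv_ne_zero two_pi_pos.ne')

lemma continuous_fourierHat {f : ℝ → ℂ} (hf : Integrable f) : Continuous (fourierHat f) := by
  rw [fourierHat_eq_fourier_comp_mul]
  exact (VectorFourier.fourierIntegral_continuous Real.continuous_fourierChar
    (innerSL ℝ).continuous₂ hf).comp (continuous_const_mul _)

lemma integral_fourierHat_mul_exp {f : ℝ → ℂ} (hf : Integrable f) (hf' : Integrable (𝓕 f))
    {x : ℝ} (hx : ContinuousAt f x) :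
    ∫ t : ℝ, fourierHat f t * exp (I * t * x) = 2 * π * f x := by
  set g : ℝ → ℂ := fun t => fourierHat f t * exp (I * t * x)
  have h_rescale : ∫ s : ℝ, g (2 * π * s) = f x := by
    rw [← hf.fourierInv_fourier_eq hf' hx, Real.fourierInv_eq']
    congr 1 with s
    simp only [g, fourierHat_two_pi_mul, smul_eq_mul, RCLike.inner_apply, conj_trivial]
    push_cast
    ring_nf
  rw [← h_rescale, Measure.integral_comp_mul_left, abs_of_pos (inv_pos.2 two_pi_pos),
    Complex.real_smul]
  push_cast
  field_simp

lemma cfc_re_eq_integral_fourierHat_smul_cfc_exp {A : Type*} [CStarAlgebra A] (a : A)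
    [IsStarNormal a] {f : ℝ → ℂ} (hf : Integrable f) (hf' : Integrable (𝓕 f))
    (hc : Continuous f) :
    cfc (fun z : ℂ => f z.re) a =
      (1 / (2 * (π : ℂ))) •
        ∫ t : ℝ, fourierHat f t • cfc (fun z : ℂ => exp (I * t * z.re)) a := by
  have h_const_mul (t : ℝ) : fourierHat f t • cfc (fun z : ℂ => exp (I * t * z.re)) a =
      cfc (fun z : ℂ => fourierHat f t * exp (I * t * z.re)) a :=
    (cfc_const_mul _ _ a).symm
  have h_integral : ∫ t : ℝ, cfc (fun z : ℂ => fourierHat f t * exp (I * t * z.re)) a =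
      cfc (fun z : ℂ => ∫ t : ℝ, fourierHat f t * exp (I * t * z.re)) a := by
    refine (cfc_integral _ (fun t => ‖fourierHat f t‖) a ?_ ?_
      (integrable_fourierHat hf').norm.2).symm
    · exact Continuous.continuousOn (by have := continuous_fourierHat hf; fun_prop)
    · refine .of_forall fun t z _ => ?_
      rw [norm_mul, norm_exp]
      simp [Complex.mul_re]
  have h_inversion : (fun z : ℂ => ∫ t : ℝ, fourierHat f t * exp (I * t * z.re)) =
      fun z => (2 * π : ℂ) * f z.re :=
    funext fun z => integral_fourierHat_mul_exp hf hf' hc.continuousAt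
  simp_rw [h_const_mul, h_integral, h_inversion,
    cfc_const_mul (2 * π : ℂ) (fun z : ℂ => f z.re) a, smul_smul]
  rw [one_div, inv_mul_cancel₀ (by simp [pi_ne_zero]), one_smul]

/-- for a bounded selfadjoint operator `D` on a complex Hilbert
space and a Schwartz function `f`, one has
`f(D) = (1/(2π)) ∫_ℝ f̂(t) e^{itD} dt` (a Bochner integral in `B(H)`). -/
theorem statement0 {H : Type*} [NormedAddCommGroup H] [InnerProductSpace ℂ H]
    [CompleteSpace H] (D : H →L[ℂ] H) (hD : IsSelfAdjoint D)
    (f : SchwartzMap ℝ ℂ) :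
    fc (fun x => f x) D =
      (1 / (2 * (Real.pi : ℂ))) •
        ∫ t : ℝ, fourierHat (fun x => f x) t •
          fc (fun x : ℝ => Complex.exp (Complex.I * t * x)) D := by
  have : IsStarNormal D := hD.isStarNormal
  have hf' : Integrable (𝓕 (f : ℝ → ℂ)) := (𝓕 f).integrable
  exact cfc_re_eq_integral_fourierHat_smul_cfc_exp D f.integrable hf' f.continuous
end

section
/- Let H be a complex Hilbert space, let D and E be bounded selfadjoint operators on H, let P be a bounded operator on H, let r > 0 and a > 0. Suppose cos(tD) ∘ P = cos(tE) ∘ P for all t ∈ [0, r], and that the spectrum of E is contained in {λ ∈ ℝ : a ≤ |λ|}. Then for every even Schwartz function f : ℝ → ℂ whose Fourier transform f̂ is supported in [-r, r], one has ‖f(D) ∘ P‖ ≤ ‖P‖ · sup{|f(λ)| : λ ∈ ℝ, a ≤ |λ|}. -/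
open MeasureTheory

/-!
Fourier inversion writes an even Schwartz function as a cosine transform,
`f λ = (2π)⁻¹ ∫ f̂(t) cos(tλ) dt`, and the continuous functional calculus commutes with this
integral. Since `f̂` vanishes outside `[-r, r]` and `cos(tD) = cos(|t|D)`, the operators `f(D) P`
and `f(E) P` are the same average of `cos(tD) P = cos(tE) P`. Hence `‖f(D) P‖ = ‖f(E) P‖ ≤ ‖f(E)‖ ‖P‖`,
and `‖f(E)‖` is at most the supremum of `|f|` over the spectrum of `E`, which lies in `{a ≤ |λ|}`.
-/

open FourierTransform Real

lemma fourierHat_eq_fourier (f : ℝ → ℂ) (t : ℝ) : fourierHat f t = 𝓕 f (t / (2 * π)) := by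
  rw [Real.fourier_eq', fourierHat]
  congr 1 with x
  rw [smul_eq_mul, mul_comm, real_inner_eq_re_inner, RCLike.inner_apply, conj_trivial,
    RCLike.re_to_real]
  congr 2
  push_cast
  field_simp

lemma fourierHat_neg_of_even {f : ℝ → ℂ} (hf : ∀ x, f (-x) = f x) (t : ℝ) :
    fourierHat f (-t) = fourierHat f t := by
  rw [fourierHat, fourierHat, ← integral_neg_eq_self]
  congr 1 with x
  rw [hf]
  push_cast
  ring_nf

namespace SchwartzMap

lemma fourierHat_eq_comp (f : 𝓢(ℝ, ℂ)) : fourierHat f = ⇑(𝓕 f : 𝓢(ℝ, ℂ)) ∘ (· / (2 * π)) := by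
  ext t
  rw [fourierHat_eq_fourier, Function.comp_apply, fourier_coe]

lemma continuous_fourierHat (f : 𝓢(ℝ, ℂ)) : Continuous (fourierHat f) := by
  rw [fourierHat_eq_comp]
  exact (𝓕 f : 𝓢(ℝ, ℂ)).continuous.comp (continuous_id.div_const _)

lemma integrable_fourierHat (f : 𝓢(ℝ, ℂ)) : Integrable (fourierHat f) := by
  rw [fourierHat_eq_comp]
  exact (𝓕 f : 𝓢(ℝ, ℂ)).integrable.comp_div (by positivity)

lemma eq_integral_fourierHat_mul_exp (f : 𝓢(ℝ, ℂ)) (x : ℝ) :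
    f x = (2 * π : ℂ)⁻¹ * ∫ t : ℝ, fourierHat f t * Complex.exp ((t * x : ℝ) * Complex.I) := by
  have hinv : 𝓕⁻ (𝓕 ⇑f) = f :=
    f.continuous.fourierInv_fourier_eq f.integrable (fourier_coe f ▸ (𝓕 f : 𝓢(ℝ, ℂ)).integrable)
  have hfourier (v : ℝ) : 𝓕 (⇑f) v = fourierHat f (2 * π * v) := by
    rw [fourierHat_eq_fourier, mul_div_cancel_left₀ _ (by positivity)]
  conv_lhs => rw [← hinv, Real.fourierInv_eq']
  have := Measure.integral_comp_mul_left
    (fun t : ℝ => fourierHat f t * Complex.exp ((t * x : ℝ) * Complex.I)) (2 * π)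
  rw [abs_of_pos (by positivity), Complex.real_smul, Complex.ofReal_inv] at this
  push_cast at this ⊢
  rw [← this]
  congr 1 with v
  rw [hfourier, smul_eq_mul, mul_comm, real_inner_eq_re_inner, RCLike.inner_apply, conj_trivial,
    RCLike.re_to_real]
  push_cast
  ring_nf

lemma eq_integral_fourierHat_mul_cos (f : 𝓢(ℝ, ℂ)) (hf : ∀ x, f (-x) = f x) (x : ℝ) :
    f x = ∫ t : ℝ, (2 * π : ℂ)⁻¹ * fourierHat f t * Complex.cos (t * x) := by
  set e : ℝ → ℂ := fun t => fourierHat f t * Complex.exp ((t * x : ℝ) * Complex.I)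
  have he : Integrable e := f.integrable_fourierHat.mul_bdd (by fun_prop)
    (.of_forall fun t => (Complex.norm_exp_ofReal_mul_I _).le)
  have hsymm (t : ℝ) : e t + e (-t) = 2 * (fourierHat f t * Complex.cos (t * x)) := by
    simp only [e, fourierHat_neg_of_even hf, Complex.exp_mul_I]
    push_cast
    rw [neg_mul, Complex.cos_neg, Complex.sin_neg]
    ring
  have hcos : ∫ t : ℝ, fourierHat f t * Complex.cos (t * x) = ∫ t, e t := by
    calc ∫ t : ℝ, fourierHat f t * Complex.cos (t * x)
        = (∫ t, (e t + e (-t))) / 2 := by simp only [hsymm, integral_const_mul]; ring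
      _ = ∫ t, e t := by rw [integral_add he he.comp_neg, integral_neg_eq_self]; ring
  simp only [mul_assoc, integral_const_mul, hcos]
  exact f.eq_integral_fourierHat_mul_exp x

end SchwartzMap

section CosineTransform

variable {A : Type*} [CStarAlgebra A]

lemma norm_mul_cos_ofReal_mul_le (w : ℂ) (t s : ℝ) : ‖w * Complex.cos (t * s)‖ ≤ ‖w‖ := by
  rw [norm_mul, ← Complex.ofReal_mul, ← Complex.ofReal_cos, Complex.norm_real, Real.norm_eq_abs]
  exact mul_le_of_le_one_right (norm_nonneg w) (Real.abs_cos_le_one _)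

variable (a : A) [IsStarNormal a] {c : ℝ → ℂ} (hc : Continuous c) (hc_int : Integrable c)
include hc hc_int

lemma integrable_smul_cfc_cos :
    Integrable fun t : ℝ => c t • cfc (fun z : ℂ => Complex.cos (t * z.re)) a := by
  have := integrable_cfc (fun (t : ℝ) (z : ℂ) => c t * Complex.cos (t * z.re)) (‖c ·‖) a
    (by fun_prop) (.of_forall fun t z _ => ?_) hc_int.norm.hasFiniteIntegral
  · simpa only [fun t : ℝ => cfc_const_mul (c t) (fun z : ℂ => Complex.cos (t * z.re)) a]
      using this
  · exact norm_mul_cos_ofReal_mul_le (c t) t z.re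

lemma cfc_re_eq_integral_smul_cfc_cos {φ : ℝ → ℂ}
    (hφ : ∀ x, φ x = ∫ t, c t * Complex.cos (t * x)) :
    cfc (fun z : ℂ => φ z.re) a = ∫ t : ℝ, c t • cfc (fun z : ℂ => Complex.cos (t * z.re)) a := by
  simp only [hφ]
  rw [cfc_integral (fun (t : ℝ) (z : ℂ) => c t * Complex.cos (t * z.re)) (‖c ·‖) a
    (by fun_prop) (.of_forall fun t z _ => ?_) hc_int.norm.hasFiniteIntegral]
  · simp only [fun t : ℝ => cfc_const_mul (c t) (fun z : ℂ => Complex.cos (t * z.re)) a]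
  · exact norm_mul_cos_ofReal_mul_le (c t) t z.re

lemma cfc_re_mul_eq_of_cos_mul_eq (b p : A) [IsStarNormal b] {φ : ℝ → ℂ}
    (hφ : ∀ x, φ x = ∫ t, c t * Complex.cos (t * x))
    (h : ∀ t, c t ≠ 0 → cfc (fun z : ℂ => Complex.cos (t * z.re)) a * p =
      cfc (fun z : ℂ => Complex.cos (t * z.re)) b * p) :
    cfc (fun z : ℂ => φ z.re) a * p = cfc (fun z : ℂ => φ z.re) b * p := by
  rw [cfc_re_eq_integral_smul_cfc_cos a hc hc_int hφ,
    cfc_re_eq_integral_smul_cfc_cos b hc hc_int hφ,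
    ← integral_mul_const_of_integrable (integrable_smul_cfc_cos a hc hc_int),
    ← integral_mul_const_of_integrable (integrable_smul_cfc_cos b hc hc_int)]
  congr 1 with t
  by_cases ht : c t = 0
  · simp [ht]
  · rw [smul_mul_assoc, smul_mul_assoc, h t ht]

end CosineTransform

lemma norm_cfc_re_le_iSup {A : Type*} [CStarAlgebra A] {a : A} (ha : IsSelfAdjoint a)
    {p : ℝ → Prop} (hspec : spectrum ℝ a ⊆ {x | p x}) {φ : ℝ → ℂ}
    (hφ : BddAbove (Set.range fun x : {x // p x} => ‖φ x‖)) :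
    ‖cfc (fun z : ℂ => φ z.re) a‖ ≤ ⨆ x : {x // p x}, ‖φ x‖ :=
  norm_cfc_le (Real.iSup_nonneg fun _ => norm_nonneg _) fun z hz =>
    le_ciSup hφ ⟨z.re, hspec (ha.spectrumRestricts.apply_mem hz)⟩

lemma SchwartzMap.bddAbove_range_norm {p : ℝ → Prop} (f : SchwartzMap ℝ ℂ) :
    BddAbove (Set.range fun x : {x // p x} => ‖f x‖) :=
  ⟨‖f.toBoundedContinuousFunction‖, by
    rintro - ⟨x, rfl⟩
    exact f.toBoundedContinuousFunction.norm_coe_le_norm x⟩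

theorem statement4_general {H : Type*} [NormedAddCommGroup H] [InnerProductSpace ℂ H]
    [CompleteSpace H] (D E P : H →L[ℂ] H)
    (hD : IsSelfAdjoint D) (hE : IsSelfAdjoint E) (r a : ℝ)
    (hcos : ∀ t ∈ Set.Icc (0 : ℝ) r,
      fc (fun x : ℝ => Complex.cos ((t : ℂ) * x)) D ∘L P =
        fc (fun x : ℝ => Complex.cos ((t : ℂ) * x)) E ∘L P)
    (hspec : spectrum ℝ E ⊆ {lam : ℝ | a ≤ |lam|})
    (f : SchwartzMap ℝ ℂ) (hf_even : ∀ x : ℝ, f (-x) = f x)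
    (hf_supp : Function.support (fourierHat fun x => f x) ⊆ Set.Icc (-r) r) :
    ‖fc (fun x => f x) D ∘L P‖ ≤ ‖P‖ * ⨆ lam : {x : ℝ // a ≤ |x|}, ‖f (lam : ℝ)‖ := by
  have := hD.isStarNormal
  have := hE.isStarNormal
  set c : ℝ → ℂ := fun t => (2 * π : ℂ)⁻¹ * fourierHat f t
  have hcos_supp (t : ℝ) (ht : c t ≠ 0) :
      fc (fun x : ℝ => Complex.cos (t * x)) D ∘L P =
        fc (fun x : ℝ => Complex.cos (t * x)) E ∘L P := by
    have hcos_eq : (fun x : ℝ => Complex.cos (t * x)) = fun x : ℝ => Complex.cos (|t| * x) := by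
      rcases abs_choice t with h | h <;> simp [h]
    rw [hcos_eq]
    exact hcos |t| ⟨abs_nonneg t, abs_le.2 (hf_supp (right_ne_zero_of_mul ht))⟩
  have hDE : fc (fun x => f x) D ∘L P = fc (fun x => f x) E ∘L P :=
    cfc_re_mul_eq_of_cos_mul_eq D (continuous_const.mul f.continuous_fourierHat)
      (f.integrable_fourierHat.const_mul _) E P (f.eq_integral_fourierHat_mul_cos hf_even) hcos_supp
  calc ‖fc (fun x => f x) D ∘L P‖ = ‖fc (fun x => f x) E ∘L P‖ := by rw [hDE]
    _ ≤ ‖fc (fun x => f x) E‖ * ‖P‖ := ContinuousLinearMap.opNorm_comp_le _ _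
    _ ≤ (⨆ lam : {x : ℝ // a ≤ |x|}, ‖f (lam : ℝ)‖) * ‖P‖ := by
      gcongr
      exact norm_cfc_re_le_iSup hE hspec f.bddAbove_range_norm
    _ = _ := mul_comm _ _

/-- if `cos(tD) P = cos(tE) P` for all `t ∈ [0, r]` and the
spectrum of `E` lies in `{λ : a ≤ |λ|}`, then for every even Schwartz function
`f` with `f̂` supported in `[-r, r]`,
`‖f(D) P‖ ≤ ‖P‖ · sup {|f(λ)| : a ≤ |λ|}`. -/
theorem statement4 {H : Type*} [NormedAddCommGroup H] [InnerProductSpace ℂ H]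
    [CompleteSpace H] (D E P : H →L[ℂ] H)
    (hD : IsSelfAdjoint D) (hE : IsSelfAdjoint E) (r a : ℝ) (hr : 0 < r) (ha : 0 < a)
    (hcos : ∀ t ∈ Set.Icc (0 : ℝ) r,
      fc (fun x : ℝ => Complex.cos ((t : ℂ) * x)) D ∘L P =
        fc (fun x : ℝ => Complex.cos ((t : ℂ) * x)) E ∘L P)
    (hspec : spectrum ℝ E ⊆ {lam : ℝ | a ≤ |lam|})
    (f : SchwartzMap ℝ ℂ) (hf_even : ∀ x : ℝ, f (-x) = f x)
    (hf_supp : Function.support (fourierHat fun x => f x) ⊆ Set.Icc (-r) r) :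
    ‖fc (fun x => f x) D ∘L P‖ ≤ ‖P‖ * ⨆ lam : {x : ℝ // a ≤ |x|}, ‖f (lam : ℝ)‖ :=
  statement4_general D E P hD hE r a hcos hspec f hf_even hf_supp
end

section
/- Let H₁ and H₂ be complex Hilbert spaces, let D₁ and D₂ be bounded selfadjoint operators on H₁ and H₂ respectively, let U : H₁ → H₂ be a unitary isomorphism, let A₁ and A₂ be bounded operators on H₁ and H₂ respectively, and let r > 0. Suppose U ∘ e^{itD₁} ∘ A₁ = e^{itD₂} ∘ A₂ ∘ U for all t ∈ ℝ with |t| ≤ r. Then for every Schwartz function f : ℝ → ℂ whose Fourier transform f̂ is supported in [-r, r], one has U ∘ f(D₁) ∘ A₁ = f(D₂) ∘ A₂ ∘ U. -/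
/-!
Fourier inversion writes a Schwartz function as a superposition of the exponentials
`x ↦ e^{2πiξx}` with weight `𝓕 f ξ`. Since the continuous functional calculus commutes with
Bochner integrals, `f(D) = ∫ 𝓕 f ξ • e^{2πiξD} dξ`. Only frequencies with `|2πξ| ≤ r`
carry weight, and for those the exponentials are intertwined by hypothesis; composing with
`U` and `A` commutes with the integral, so the intertwining passes to `f(D)`.
-/

open MeasureTheory

open Complex Real FourierTransform

lemma fourier_eq_fourierHat (f : ℝ → ℂ) (ξ : ℝ) : 𝓕 f ξ = fourierHat f (2 * π * ξ) := by
  rw [fourier_real_eq_integral_exp_smul, fourierHat]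
  congr 1 with x
  rw [smul_eq_mul, mul_comm]
  push_cast
  ring_nf

lemma SchwartzMap.eq_integral_fourier_mul_exp (f : SchwartzMap ℝ ℂ) (x : ℝ) :
    f x = ∫ ξ : ℝ, 𝓕 (f : ℝ → ℂ) ξ * cexp (I * (2 * π * ξ : ℝ) * x) := by
  conv_lhs => rw [← f.continuous.fourierInv_fourier_eq f.integrable (𝓕 f).integrable]
  rw [fourierInv_eq']
  congr 1 with ξ
  rw [smul_eq_mul, mul_comm]
  simp only [RCLike.inner_apply, conj_trivial]
  push_cast
  ring_nf

lemma norm_mul_exp_I_mul_ofReal_mul_ofReal (c : ℂ) (t x : ℝ) :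
    ‖c * cexp (I * t * x)‖ = ‖c‖ := by
  rw [norm_mul, show I * t * x = ((t * x : ℝ) : ℂ) * I by push_cast; ring,
    norm_exp_ofReal_mul_I, mul_one]

section FunctionalCalculus

variable {H : Type*} [NormedAddCommGroup H] [InnerProductSpace ℂ H] [CompleteSpace H]

lemma smul_fc_exp_eq_cfc (D : H →L[ℂ] H) (c : ℂ) (t : ℝ) :
    c • fc (fun x : ℝ => cexp (I * t * x)) D = cfc (fun z : ℂ => c * cexp (I * t * z.re)) D :=
  (cfc_const_mul c _ D).symm

variable (D : H →L[ℂ] H) [IsStarNormal D] {g : ℝ → ℂ}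

lemma integrable_smul_fc_exp (hgc : Continuous g) (hgi : Integrable g) :
    Integrable fun ξ : ℝ => g ξ • fc (fun x : ℝ => cexp (I * (2 * π * ξ : ℝ) * x)) D := by
  simp_rw [smul_fc_exp_eq_cfc]
  exact integrable_cfc _ (‖g ·‖) D (by fun_prop)
    (.of_forall fun _ _ _ => (norm_mul_exp_I_mul_ofReal_mul_ofReal _ _ _).le)
    hgi.norm.hasFiniteIntegral

lemma fc_eq_integral_smul_fc_exp (hgc : Continuous g) (hgi : Integrable g) {f : ℝ → ℂ}
    (hfg : ∀ x : ℝ, f x = ∫ ξ : ℝ, g ξ * cexp (I * (2 * π * ξ : ℝ) * x)) :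
    fc f D = ∫ ξ : ℝ, g ξ • fc (fun x : ℝ => cexp (I * (2 * π * ξ : ℝ) * x)) D := by
  simp_rw [smul_fc_exp_eq_cfc]
  rw [← cfc_integral _ (‖g ·‖) D (by fun_prop)
    (.of_forall fun _ _ _ => (norm_mul_exp_I_mul_ofReal_mul_ofReal _ _ _).le)
    hgi.norm.hasFiniteIntegral]
  simp only [fc, hfg]

end FunctionalCalculus

section Intertwining

variable {X E E' F G K : Type*} [MeasurableSpace X] {μ : Measure X}
  [NormedAddCommGroup E] [NormedSpace ℂ E] [NormedAddCommGroup E'] [NormedSpace ℂ E']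
  [NormedAddCommGroup F] [NormedSpace ℂ F] [CompleteSpace F]
  [NormedAddCommGroup G] [NormedSpace ℂ G] [CompleteSpace G]
  [NormedAddCommGroup K] [NormedSpace ℂ K]

lemma ContinuousLinearMap.comp_integral_comp_eq_integral_comp {T₁ : X → E →L[ℂ] F}
    {T₂ : X → E' →L[ℂ] G} (U : F →L[ℂ] G) (A : K →L[ℂ] E) (B : K →L[ℂ] E')
    (hT₁ : Integrable T₁ μ) (hT₂ : Integrable T₂ μ)
    (h : ∀ᵐ x ∂μ, U ∘L T₁ x ∘L A = T₂ x ∘L B) :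
    U ∘L (∫ x, T₁ x ∂μ) ∘L A = (∫ x, T₂ x ∂μ) ∘L B := by
  calc U ∘L (∫ x, T₁ x ∂μ) ∘L A
      = ∫ x, U ∘L T₁ x ∘L A ∂μ :=
        (((compL ℂ K F G U).comp ((compL ℂ K E F).flip A)).integral_comp_comm hT₁).symm
    _ = ∫ x, T₂ x ∘L B ∂μ := integral_congr_ae h
    _ = (∫ x, T₂ x ∂μ) ∘L B := ((compL ℂ K E' G).flip B).integral_comp_comm hT₂

end Intertwining

theorem statement10_general {H₁ H₂ : Type*}
    [NormedAddCommGroup H₁] [InnerProductSpace ℂ H₁] [CompleteSpace H₁]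
    [NormedAddCommGroup H₂] [InnerProductSpace ℂ H₂] [CompleteSpace H₂]
    (D₁ A₁ : H₁ →L[ℂ] H₁) (D₂ A₂ : H₂ →L[ℂ] H₂)
    (hD₁ : IsSelfAdjoint D₁) (hD₂ : IsSelfAdjoint D₂)
    (U : H₁ ≃ₗᵢ[ℂ] H₂) (r : ℝ)
    (h : ∀ t : ℝ, |t| ≤ r →
      (U.toContinuousLinearEquiv : H₁ →L[ℂ] H₂) ∘L
          fc (fun x : ℝ => Complex.exp (Complex.I * t * x)) D₁ ∘L A₁ =
        fc (fun x : ℝ => Complex.exp (Complex.I * t * x)) D₂ ∘L A₂ ∘L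
          (U.toContinuousLinearEquiv : H₁ →L[ℂ] H₂))
    (f : SchwartzMap ℝ ℂ)
    (hf_supp : Function.support (fourierHat fun x => f x) ⊆ Set.Icc (-r) r) :
    (U.toContinuousLinearEquiv : H₁ →L[ℂ] H₂) ∘L fc (fun x => f x) D₁ ∘L A₁ =
      fc (fun x => f x) D₂ ∘L A₂ ∘L (U.toContinuousLinearEquiv : H₁ →L[ℂ] H₂) := by
  have := hD₁.isStarNormal
  have := hD₂.isStarNormal
  set g : ℝ → ℂ := 𝓕 (f : ℝ → ℂ)
  have hgc : Continuous g := (𝓕 f).continuous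
  have hgi : Integrable g := (𝓕 f).integrable
  have hg_supp (ξ : ℝ) (hξ : g ξ ≠ 0) : |2 * π * ξ| ≤ r :=
    abs_le.mpr (hf_supp (by rwa [Function.mem_support, ← fourier_eq_fourierHat]))
  rw [fc_eq_integral_smul_fc_exp D₁ hgc hgi f.eq_integral_fourier_mul_exp,
    fc_eq_integral_smul_fc_exp D₂ hgc hgi f.eq_integral_fourier_mul_exp]
  refine ContinuousLinearMap.comp_integral_comp_eq_integral_comp _ _ _
    (integrable_smul_fc_exp D₁ hgc hgi) (integrable_smul_fc_exp D₂ hgc hgi)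
    (.of_forall fun ξ => ?_)
  by_cases hξ : g ξ = 0
  · simp [hξ]
  · simp only [ContinuousLinearMap.smul_comp, ContinuousLinearMap.comp_smul, h _ (hg_supp ξ hξ)]

/-- if a unitary isomorphism `U` intertwines `e^{itD₁} A₁` and
`e^{itD₂} A₂` for all `|t| ≤ r`, then it intertwines `f(D₁) A₁` and
`f(D₂) A₂` for every Schwartz function `f` with `f̂` supported in `[-r, r]`. -/
theorem statement10 {H₁ H₂ : Type*}
    [NormedAddCommGroup H₁] [InnerProductSpace ℂ H₁] [CompleteSpace H₁]
    [NormedAddCommGroup H₂] [InnerProductSpace ℂ H₂] [CompleteSpace H₂]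
    (D₁ A₁ : H₁ →L[ℂ] H₁) (D₂ A₂ : H₂ →L[ℂ] H₂)
    (hD₁ : IsSelfAdjoint D₁) (hD₂ : IsSelfAdjoint D₂)
    (U : H₁ ≃ₗᵢ[ℂ] H₂) (r : ℝ) (hr : 0 < r)
    (h : ∀ t : ℝ, |t| ≤ r →
      (U.toContinuousLinearEquiv : H₁ →L[ℂ] H₂) ∘L
          fc (fun x : ℝ => Complex.exp (Complex.I * t * x)) D₁ ∘L A₁ =
        fc (fun x : ℝ => Complex.exp (Complex.I * t * x)) D₂ ∘L A₂ ∘L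
          (U.toContinuousLinearEquiv : H₁ →L[ℂ] H₂))
    (f : SchwartzMap ℝ ℂ)
    (hf_supp : Function.support (fourierHat fun x => f x) ⊆ Set.Icc (-r) r) :
    (U.toContinuousLinearEquiv : H₁ →L[ℂ] H₂) ∘L fc (fun x => f x) D₁ ∘L A₁ =
      fc (fun x => f x) D₂ ∘L A₂ ∘L (U.toContinuousLinearEquiv : H₁ →L[ℂ] H₂) :=
  statement10_general D₁ A₁ D₂ A₂ hD₁ hD₂ U r h f hf_supp
end
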